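/- For all u, v in Λ³(ℂ⁹), the linear endomorphism u × v of ℂ⁹ defined by (u × v)x = *(v ∧ *(u ∧ x)) + (2/3)(u,v)x has trace zero. -/

import Mathlib

open scoped BigOperators
open Matrix

noncomputable section

/-- Index type for a basis of `Λᵏ(ℂ⁹)`: subsets of `Fin 9` of cardinality `k`. -/
abbrev Idx (k : ℕ) : Type := {s : Finset (Fin 9) // s.card = k}

/-- `Λᵏ(ℂ⁹)` in coordinates with respect to the basis `e_{i₁} ∧ ⋯ ∧ e_{i_k}`, `i₁ < ⋯ < i_k`. -/
abbrev Lam (k : ℕ) : Type := Idx k → ℂ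

/-- Sign obtained when sorting the increasing enumeration of `s` followed by that of `t`. -/
def sgn (s t : Finset (Fin 9)) : ℂ :=
  (-1 : ℂ) ^ (∑ i ∈ s, (t.filter (fun j => j < i)).card)

/-- Wedge product `Λᵏ × Λˡ → Λ^{k+l}`. -/
def wedge {k l : ℕ} (u : Lam k) (v : Lam l) : Lam (k + l) := fun w =>
  ∑ s ∈ (w.1.powerset.filter fun s => s.card = k).attach,
    sgn s.1 (w.1 \ s.1) *
      u ⟨s.1, by
        have hs := s.2
        simp only [Finset.mem_filter] at hs
        exact hs.2⟩ *
      v ⟨w.1 \ s.1, by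
        have hs := s.2
        simp only [Finset.mem_filter, Finset.mem_powerset] at hs
        rw [Finset.card_sdiff_of_subset hs.1, w.2, hs.2]
        omega⟩

/-- The Hodge star operator `Λᵏ → Λˡ`, `k + l = 9`, characterized by
`(⋆u, v) = (u ∧ v, e₁ ∧ ⋯ ∧ e₉)`. -/
def hstar {k l : ℕ} (h : k + l = 9) (u : Lam k) : Lam l := fun t =>
  sgn t.1ᶜ t.1 *
    u ⟨t.1ᶜ, by
      rw [Finset.card_compl, t.2]
      simp only [Fintype.card_fin]
      omega⟩

def star3 : Lam 3 → Lam 6 := hstar (by norm_num)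
def star4 : Lam 4 → Lam 5 := hstar (by norm_num)
def star6 : Lam 6 → Lam 3 := hstar (by norm_num)
def star8 : Lam 8 → Lam 1 := hstar (by norm_num)

/-- The bilinear form on `Λᵏ(ℂ⁹)` induced by the standard bilinear form of `ℂ⁹`
(the Gram determinant form); the chosen basis is orthonormal for it. -/
def ip {k : ℕ} (u v : Lam k) : ℂ := ∑ s, u s * v s

/-- The standard bilinear form on `ℂ⁹`. -/
def ip9 (x y : Fin 9 → ℂ) : ℂ := ∑ i, x i * y i

/-- A vector of `ℂ⁹` viewed as an element of `Λ¹(ℂ⁹)`. -/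
def vec (x : Fin 9 → ℂ) : Lam 1 := fun s => ∑ i ∈ s.1, x i

/-- An element of `Λ¹(ℂ⁹)` viewed as a vector of `ℂ⁹`. -/
def unvec (u : Lam 1) : Fin 9 → ℂ := fun i => u ⟨{i}, Finset.card_singleton i⟩

/-- The `k × k` minor of `A` with rows `s` and columns `t` (in increasing order). -/
def minor {k : ℕ} (A : Matrix (Fin 9) (Fin 9) ℂ) (s t : Idx k) : ℂ :=
  Matrix.det (Matrix.of fun i j : Fin k =>
    A (s.1.orderIsoOfFin s.2 i) (t.1.orderIsoOfFin t.2 j))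

/-- The natural action of a matrix `A` on `Λᵏ(ℂ⁹)`:
`A(u₁ ∧ ⋯ ∧ u_k) = Au₁ ∧ ⋯ ∧ Au_k`, in coordinates given by minors (Cauchy–Binet). -/
def act {k : ℕ} (A : Matrix (Fin 9) (Fin 9) ℂ) (u : Lam k) : Lam k := fun s =>
  ∑ t, minor A s t * u t

/-- Coordinate matrix of the derivation action of `D` on `Λᵏ(ℂ⁹)`
(the differential of `act` at the identity). -/
def dminor {k : ℕ} (D : Matrix (Fin 9) (Fin 9) ℂ) (s t : Idx k) : ℂ :=
  ∑ m : Fin k, Matrix.det (Matrix.of fun i j : Fin k =>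
    if i = m then D (s.1.orderIsoOfFin s.2 i) (t.1.orderIsoOfFin t.2 j)
    else if (s.1.orderIsoOfFin s.2 i : Fin 9) = (t.1.orderIsoOfFin t.2 j : Fin 9) then 1 else 0)

/-- The derivation action of `D` on `Λᵏ(ℂ⁹)`:
`D(u₁ ∧ u₂ ∧ u₃) = Du₁ ∧ u₂ ∧ u₃ + u₁ ∧ Du₂ ∧ u₃ + u₁ ∧ u₂ ∧ Du₃`. -/
def der {k : ℕ} (D : Matrix (Fin 9) (Fin 9) ℂ) (u : Lam k) : Lam k := fun s =>
  ∑ t, dminor D s t * u t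

/-- The endomorphism `u × v` of `ℂ⁹`: `(u × v)x = ⋆(v ∧ ⋆(u ∧ x)) + (2/3)(u,v)x`. -/
def crossApp (u v : Lam 3) (x : Fin 9 → ℂ) : Fin 9 → ℂ := fun i =>
  unvec (star8 (wedge v (star4 (wedge u (vec x))))) i + (2 / 3 : ℂ) * ip u v * x i

/-- The matrix of the endomorphism `u × v` of `ℂ⁹`. -/
def crossMat (u v : Lam 3) : Matrix (Fin 9) (Fin 9) ℂ :=
  Matrix.of fun i j => crossApp u v (fun l => if l = j then 1 else 0) i


/-!
On the basis vector `eᵢ`, the wedge `u ∧ eᵢ` only involves the coordinates `u_s` with `i ∉ s`, and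
the `i`-th coordinate of `⋆(v ∧ ⋆(u ∧ eᵢ))` is `-∑_{i ∉ s} u_s v_s`: the four signs produced by the
two stars and two wedges multiply to `(-1)^|s| = -1`. Every 3-subset `s` of `Fin 9` misses exactly
6 indices, so the first term contributes `-6 (u, v)` to the trace, cancelled by `9 · (2/3) (u, v)`.
-/

open Finset

lemma sgn_mul_self (s t : Finset (Fin 9)) : sgn s t * sgn s t = 1 := by
  rw [sgn, ← mul_pow, neg_one_mul, neg_neg, one_pow]

lemma sgn_insert {s : Finset (Fin 9)} {i : Fin 9} (hi : i ∉ s) (t : Finset (Fin 9)) :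
    sgn (insert i s) t = (-1) ^ #(t.filter (· < i)) * sgn s t := by
  rw [sgn, sum_insert hi, pow_add, sgn]

lemma sgn_singleton_right (s : Finset (Fin 9)) (i : Fin 9) :
    sgn s {i} = (-1) ^ #(s.filter (i < ·)) := by
  simp only [sgn, filter_singleton, apply_ite card, card_singleton, card_empty, card_filter]

lemma sgn_compl_singleton (i : Fin 9) : sgn {i}ᶜ {i} = (-1) ^ (8 - (i : ℕ)) := by
  have : ({i}ᶜ : Finset (Fin 9)).filter (i < ·) = Ioi i := by
    ext a
    simp only [mem_filter, mem_compl, mem_singleton, mem_Ioi, and_iff_right_iff_imp]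
    exact fun h => h.ne'
  rw [sgn_singleton_right, this, Fin.card_Ioi]

lemma card_filter_sdiff_lt_add {s : Finset (Fin 9)} {i : Fin 9} (hi : i ∉ s) :
    #(({i}ᶜ \ s).filter (· < i)) + #(s.filter (· < i)) = i := by
  rw [← card_union_of_disjoint (disjoint_filter_filter disjoint_sdiff_self_left), ← filter_union,
    sdiff_union_of_subset (by simpa using hi), ← Fin.card_Iio]
  congr 1
  ext a
  simp only [mem_filter, mem_compl, mem_singleton, mem_Iio, and_iff_right_iff_imp]
  exact fun h => h.ne

lemma card_filter_lt_add_card_filter_gt {s : Finset (Fin 9)} {i : Fin 9} (hi : i ∉ s) :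
    #(s.filter (· < i)) + #(s.filter (i < ·)) = #s := by
  rw [← card_filter_add_card_filter_not (s := s) (p := (· < i))]
  congr 2
  refine filter_congr fun a ha => ?_
  rw [not_lt, le_iff_lt_or_eq, or_iff_left]
  rintro rfl
  exact hi ha

lemma sgn_hodge_cycle {k : ℕ} {s : Finset (Fin 9)} (hs : #s = k) {i : Fin 9} (hi : i ∉ s) :
    sgn {i}ᶜ {i} * sgn s ({i}ᶜ \ s) * sgn (insert i s) ({i}ᶜ \ s) * sgn s {i} = (-1) ^ k := by
  have hlt := card_filter_sdiff_lt_add hi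
  have hsplit := card_filter_lt_add_card_filter_gt hi
  rw [sgn_compl_singleton, sgn_insert hi, sgn_singleton_right,
    show ∀ a b c d : ℂ, a * b * (c * b) * d = a * c * d * (b * b) by intros; ring,
    sgn_mul_self, mul_one, ← pow_add, ← pow_add, neg_one_pow_eq_pow_mod_two,
    neg_one_pow_eq_pow_mod_two (n := k)]
  have := i.isLt
  congr 1
  omega

lemma vec_single_apply (i : Fin 9) (t : Idx 1) :
    vec (Pi.single i 1) t = if i ∈ t.1 then 1 else 0 :=
  sum_pi_single' i 1 t.1

lemma wedge_vec_single_insert {k : ℕ} (u : Lam k) {s : Finset (Fin 9)} (hs : #s = k) {i : Fin 9}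
    (hi : i ∉ s) (h : #(insert i s) = k + 1) :
    wedge u (vec (Pi.single i 1)) ⟨insert i s, h⟩ = sgn s {i} * u ⟨s, hs⟩ := by
  have hmem : s ∈ (insert i s).powerset.filter (·.card = k) := by simp [hs, subset_insert]
  rw [wedge, sum_eq_single_of_mem ⟨s, hmem⟩ (mem_attach _ _)]
  · simp [vec_single_apply, insert_sdiff_cancel hi]
  · rintro ⟨p, hp⟩ _ hne
    simp only [mem_filter, mem_powerset] at hp
    rw [vec_single_apply, if_neg, mul_zero]
    intro hip
    have hps : p ⊆ s := fun a ha => by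
      obtain rfl | ha' := mem_insert.mp (hp.1 ha)
      · exact absurd ha (mem_sdiff.mp hip).2
      · exact ha'
    exact hne (Subtype.ext (eq_of_subset_of_card_le hps (by rw [hp.2, hs])))

lemma sum_attach_powerset_filter_card {k : ℕ} (w : Finset (Fin 9)) (g : Idx k → ℂ) :
    ∑ s ∈ (w.powerset.filter (·.card = k)).attach, g ⟨s.1, (mem_filter.mp s.2).2⟩
      = ∑ t : Idx k with t.1 ⊆ w, g t := by
  refine sum_bij' (fun s _ => ⟨s.1, (mem_filter.mp s.2).2⟩)
    (fun t ht => ⟨t.1, mem_filter.mpr ⟨mem_powerset.mpr (mem_filter.mp ht).2, t.2⟩⟩)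
    ?_ (fun _ _ => mem_attach _ _) (fun _ _ => rfl) (fun _ _ => rfl) (fun _ _ => rfl)
  intro s _
  simpa using (mem_filter.mp s.2).1

lemma star4_wedge_vec_single (u : Lam 3) {s : Finset (Fin 9)} (hs : #s = 3) {i : Fin 9}
    (hi : i ∉ s) (h5 : #({i}ᶜ \ s) = 5) :
    star4 (wedge u (vec (Pi.single i 1))) ⟨{i}ᶜ \ s, h5⟩
      = sgn (insert i s) ({i}ᶜ \ s) * (sgn s {i} * u ⟨s, hs⟩) := by
  have hcompl : ({i}ᶜ \ s)ᶜ = insert i s := by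
    ext a
    simp only [mem_compl, mem_sdiff, mem_singleton, mem_insert]
    tauto
  have h4 : #(insert i s) = 3 + 1 := by rw [card_insert_of_notMem hi, hs]
  calc _ = sgn ({i}ᶜ \ s)ᶜ ({i}ᶜ \ s) * wedge u (vec (Pi.single i 1)) ⟨_, hcompl ▸ h4⟩ := rfl
    _ = _ := by
      rw [show (⟨_, hcompl ▸ h4⟩ : Idx 4) = ⟨insert i s, h4⟩ from Subtype.ext hcompl,
        wedge_vec_single_insert u hs hi h4, hcompl]

lemma unvec_star8_wedge_star4_wedge_single (u v : Lam 3) (i : Fin 9) :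
    unvec (star8 (wedge v (star4 (wedge u (vec (Pi.single i 1)))))) i
      = -∑ t : Idx 3 with i ∉ t.1, u t * v t := by
  have h8 : #({i}ᶜ) = 8 := by simp [card_compl]
  calc _ = sgn {i}ᶜ {i} * wedge v (star4 (wedge u (vec (Pi.single i 1)))) ⟨{i}ᶜ, h8⟩ := rfl
    _ = ∑ s ∈ (({i}ᶜ : Finset (Fin 9)).powerset.filter (·.card = 3)).attach,
          -(u ⟨s.1, (mem_filter.mp s.2).2⟩ * v ⟨s.1, (mem_filter.mp s.2).2⟩) := by
        rw [wedge, mul_sum]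
        refine sum_congr rfl fun s _ => ?_
        obtain ⟨hsub, hs⟩ := mem_filter.mp s.2
        have hi : i ∉ s.1 := fun h => by simpa using mem_powerset.mp hsub h
        dsimp only
        rw [star4_wedge_vec_single u hs hi]
        linear_combination u ⟨s.1, hs⟩ * v ⟨s.1, hs⟩ * sgn_hodge_cycle hs hi
    _ = -∑ t : Idx 3 with i ∉ t.1, u t * v t := by
        rw [sum_attach_powerset_filter_card ({i}ᶜ) fun t => -(u t * v t), sum_neg_distrib]
        simp only [subset_compl_singleton]

lemma sum_sum_filter_notMem {k : ℕ} (f : Idx k → ℂ) :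
    ∑ i : Fin 9, ∑ t : Idx k with i ∉ t.1, f t = ((9 - k : ℕ) : ℂ) * ∑ t, f t := by
  simp_rw [sum_filter]
  rw [sum_comm, mul_sum]
  refine sum_congr rfl fun t _ => ?_
  rw [← sum_filter, sum_const, nsmul_eq_mul, show univ.filter (· ∉ t.1) = t.1ᶜ by ext; simp,
    card_compl, t.2, Fintype.card_fin]

lemma crossMat_apply_self (u v : Lam 3) (i : Fin 9) :
    crossMat u v i i = -∑ t : Idx 3 with i ∉ t.1, u t * v t + 2 / 3 * ip u v := by
  have hsingle : (fun l => if l = i then (1 : ℂ) else 0) = Pi.single i 1 :=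
    funext fun l => (Pi.single_apply i 1 l).symm
  rw [crossMat, of_apply, hsingle, crossApp, unvec_star8_wedge_star4_wedge_single,
    Pi.single_eq_same, mul_one]

/-- The endomorphism `u × v` of `ℂ⁹` has trace zero. -/
theorem stmt4 (u v : Lam 3) : (crossMat u v).trace = 0 := by
  calc (crossMat u v).trace = ∑ i, (-∑ t : Idx 3 with i ∉ t.1, u t * v t + 2 / 3 * ip u v) :=
        sum_congr rfl fun i _ => crossMat_apply_self u v i
    _ = -(((9 - 3 : ℕ) : ℂ) * ip u v) + 9 * (2 / 3 * ip u v) := by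
        rw [sum_add_distrib, sum_neg_distrib, sum_sum_filter_notMem, ← ip, sum_const, card_univ,
          Fintype.card_fin, nsmul_eq_mul, Nat.cast_ofNat]
    _ = 0 := by norm_num; ring

end
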